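/- arXiv:2303.07904 — 4 statements merged into one kernel-verified Lean document; each statement's English description precedes it below -/
import Mathlib

section
/- Let X_n, Y_n, and X be real-valued random variables such that X_n converges in distribution to X, Y_n converges in distribution to X, and the cumulative distribution function F_X of X is continuous. Fix α ∈ (0,1) and let (ξ_n) be a sequence of real numbers satisfying P(Y_n ≤ ξ_n) = α for every n. Then P(X_n ≤ ξ_n) → α as n → ∞. -/
/-!
Since `cdf μ` is continuous and runs from `0` to `1`, every level `t ∈ (0, 1)` is attained at
some point `a`. If `t < α`, then eventually `cdf (μY n) a < α = cdf (μY n) (ξ n)`, which forces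
`a < ξ n`, hence `cdf (μX n) (ξ n) ≥ cdf (μX n) a → t`. Letting `t ↑ α` (and symmetrically
`t ↓ α`) squeezes `cdf (μX n) (ξ n)` to `α`.
-/

open MeasureTheory ProbabilityTheory Filter
open scoped Topology

theorem Ioo_subset_range_cdf (μ : Measure ℝ) [IsProbabilityMeasure μ]
    (hcont : Continuous (cdf μ)) : Set.Ioo 0 1 ⊆ Set.range (cdf μ) := fun _ ht =>
  mem_range_of_exists_le_of_exists_ge hcont
    ((tendsto_cdf_atBot μ).eventually (eventually_le_nhds ht.1)).exists
    ((tendsto_cdf_atTop μ).eventually (eventually_ge_nhds ht.2)).exists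

section LevelCrossing

variable {ι α β : Type*} [LinearOrder α] [LinearOrder β] [TopologicalSpace β] [OrderTopology β]
  {l : Filter ι} {F : ι → α → β} {ξ : ι → α} {a : α} {c L : β}

theorem eventually_lt_of_tendsto_lt_level (hF : ∀ i, Monotone (F i))
    (hξ : ∀ i, F i (ξ i) = c) (hlim : Tendsto (fun i => F i a) l (𝓝 L)) (hL : L < c) :
    ∀ᶠ i in l, a < ξ i :=
  (hlim.eventually (eventually_lt_nhds hL)).mono fun i hi =>
    (hF i).reflect_lt (hi.trans_eq (hξ i).symm)

theorem eventually_gt_of_tendsto_gt_level (hF : ∀ i, Monotone (F i))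
    (hξ : ∀ i, F i (ξ i) = c) (hlim : Tendsto (fun i => F i a) l (𝓝 L)) (hL : c < L) :
    ∀ᶠ i in l, ξ i < a :=
  (hlim.eventually (eventually_gt_nhds hL)).mono fun i hi =>
    (hF i).reflect_lt ((hξ i).trans_lt hi)

end LevelCrossing

/-- If `X_n → X` and `Y_n → X` in distribution (expressed via pointwise convergence of
CDFs, which is equivalent to convergence in distribution since the CDF of `X` is
continuous), `α ∈ (0,1)`, and `ξ_n` is an `α`-quantile of `Y_n` for every `n`
(i.e. `P(Y_n ≤ ξ_n) = α`), then `P(X_n ≤ ξ_n) → α`. -/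
theorem tendsto_cdf_at_quantiles
    (μX μY : ℕ → Measure ℝ) (μ : Measure ℝ)
    [∀ n, IsProbabilityMeasure (μX n)] [∀ n, IsProbabilityMeasure (μY n)]
    [IsProbabilityMeasure μ]
    (hcont : Continuous (cdf μ))
    (hX : ∀ x : ℝ, Tendsto (fun n => cdf (μX n) x) atTop (𝓝 (cdf μ x)))
    (hY : ∀ x : ℝ, Tendsto (fun n => cdf (μY n) x) atTop (𝓝 (cdf μ x)))
    (α : ℝ) (hα : α ∈ Set.Ioo (0 : ℝ) 1)
    (ξ : ℕ → ℝ) (hξ : ∀ n, cdf (μY n) (ξ n) = α) :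
    Tendsto (fun n => cdf (μX n) (ξ n)) atTop (𝓝 α) := by
  have hYmono : ∀ n, Monotone (cdf (μY n)) := fun n => monotone_cdf (μY n)
  refine tendsto_order.2 ⟨fun c hc => ?_, fun c hc => ?_⟩
  · obtain ⟨t, hct, htα⟩ := exists_between (max_lt hc hα.1)
    obtain ⟨a, rfl⟩ := Ioo_subset_range_cdf μ hcont
      ⟨(le_max_right c 0).trans_lt hct, htα.trans hα.2⟩
    filter_upwards [eventually_lt_of_tendsto_lt_level hYmono hξ (hY a) htα,
      (hX a).eventually (eventually_gt_nhds ((le_max_left c 0).trans_lt hct))] with n haξ hXa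
    exact hXa.trans_le (monotone_cdf (μX n) haξ.le)
  · obtain ⟨t, hαt, htc⟩ := exists_between (lt_min hc hα.2)
    obtain ⟨b, rfl⟩ := Ioo_subset_range_cdf μ hcont
      ⟨hα.1.trans hαt, htc.trans_le (min_le_right c 1)⟩
    filter_upwards [eventually_gt_of_tendsto_gt_level hYmono hξ (hY b) hαt,
      (hX b).eventually (eventually_lt_nhds (htc.trans_le (min_le_left c 1)))] with n hξb hXb
    exact (monotone_cdf (μX n) hξb.le).trans_lt hXb
end

section
/- (Polya's theorem.) Let X_n and X be real-valued random variables such that X_n converges in distribution to X and the cumulative distribution function F_X of X is continuous. Then the convergence of distribution functions is uniform: sup_{x ∈ ℝ} |F_{X_n}(x) − F_X(x)| → 0 as n → ∞. -/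
open MeasureTheory ProbabilityTheory Filter
open scoped Topology

set_option maxHeartbeats 800000 in
private lemma polya_key
    (μn : ℕ → Measure ℝ) (μ : Measure ℝ)
    [∀ n, IsProbabilityMeasure (μn n)] [IsProbabilityMeasure μ]
    (hcont : Continuous (cdf μ))
    (h : ∀ x : ℝ, Tendsto (fun n => cdf (μn n) x) atTop (𝓝 (cdf μ x)))
    {ε : ℝ} (hε : 0 < ε) :
    ∀ᶠ n in atTop, ∀ x : ℝ, |cdf (μn n) x - cdf μ x| ≤ ε := by
  set F : ℝ → ℝ := fun x => cdf μ x with hF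
  -- choose a with F a < ε/4
  obtain ⟨a, ha⟩ : ∃ a : ℝ, F a < ε / 4 := by
    have := (tendsto_cdf_atBot μ).eventually (eventually_lt_nhds (by positivity : (0:ℝ) < ε/4))
    exact this.exists
  -- choose b0 with F b0 > 1 - ε/4
  obtain ⟨b0, hb0⟩ : ∃ b : ℝ, 1 - ε / 4 < F b := by
    have := (tendsto_cdf_atTop μ).eventually (eventually_gt_nhds (by linarith : 1 - ε/4 < 1))
    exact this.exists
  set b : ℝ := max a b0 with hbdef
  have hab : a ≤ b := le_max_left _ _
  have hb : 1 - ε / 4 < F b := lt_of_lt_of_le hb0 ((cdf μ).mono (le_max_right _ _))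
  -- uniform continuity on [a,b]
  have hUC : UniformContinuousOn F (Set.Icc a b) :=
    isCompact_Icc.uniformContinuousOn_of_continuous hcont.continuousOn
  obtain ⟨δ, hδ0, hδ⟩ := Metric.uniformContinuousOn_iff.mp hUC (ε/4) (by positivity)
  -- grid
  set m : ℕ := ⌈(b - a) / δ⌉₊ + 1 with hm
  have hm0 : 0 < m := Nat.succ_pos _
  have hm0' : (0:ℝ) < m := by exact_mod_cast hm0
  set step : ℝ := (b - a) / m with hstepdef
  have hstep0 : 0 ≤ step := div_nonneg (by linarith) hm0'.le
  have hstepδ : step < δ := by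
    have h1 : (b - a) / δ < (m : ℝ) := by
      have := Nat.le_ceil ((b - a) / δ)
      push_cast [hm]; linarith
    have h2 : b - a < m * δ := by
      rwa [div_lt_iff₀ hδ0] at h1
    rw [hstepdef, div_lt_iff₀ hm0']
    linarith
  set p : ℕ → ℝ := fun i => a + i * step with hp
  have hpm : p m = b := by
    simp only [hp, hstepdef]
    field_simp
    ring
  have hpa : p 0 = a := by simp [hp]
  have hp_mem : ∀ i ≤ m, p i ∈ Set.Icc a b := by
    intro i hi
    constructor
    · simp only [hp]; nlinarith [Nat.cast_nonneg (α := ℝ) i]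
    · have : (i : ℝ) ≤ m := by exact_mod_cast hi
      calc p i = a + i * step := rfl
        _ ≤ a + m * step := by nlinarith
        _ = b := hpm
  -- eventually all grid points are ε/4-close
  have hev : ∀ᶠ n in atTop, ∀ i ∈ Finset.range (m + 1),
      |cdf (μn n) (p i) - F (p i)| < ε / 4 := by
    rw [eventually_all_finset]
    intro i _
    have := (h (p i)).eventually (Metric.ball_mem_nhds (F (p i)) (by positivity : (0:ℝ) < ε/4))
    filter_upwards [this] with n hn
    rwa [Real.dist_eq] at hn
  filter_upwards [hev] with n hn x
  set G : ℝ → ℝ := fun x => cdf (μn n) x with hG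
  have hGmono : Monotone G := (cdf (μn n)).mono
  have hFmono : Monotone F := (cdf μ).mono
  have hG0 : ∀ y, 0 ≤ G y := fun y => cdf_nonneg _ y
  have hG1 : ∀ y, G y ≤ 1 := fun y => cdf_le_one _ y
  have hF0 : ∀ y, 0 ≤ F y := fun y => cdf_nonneg _ y
  have hF1 : ∀ y, F y ≤ 1 := fun y => cdf_le_one _ y
  have ha_pt : |G a - F a| < ε / 4 := by
    have := hn 0 (by simp); rwa [hpa] at this
  have hb_pt : |G b - F b| < ε / 4 := by
    have := hn m (by simp); rwa [hpm] at this
  rcases le_or_gt x a with hxa | hax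
  · -- x ≤ a
    have h1 : G x ≤ G a := hGmono hxa
    have h2 : F x ≤ F a := hFmono hxa
    obtain ⟨hl, hr⟩ := abs_lt.mp ha_pt
    rw [abs_le]
    constructor <;> nlinarith [hG0 x, hF0 x]
  rcases le_or_gt x b with hxb | hbx
  swap
  · -- b < x
    have h1 : G b ≤ G x := hGmono hbx.le
    have h2 : F b ≤ F x := hFmono hbx.le
    obtain ⟨hl, hr⟩ := abs_lt.mp hb_pt
    rw [abs_le]
    constructor <;> nlinarith [hG1 x, hF1 x]
  · -- a < x ≤ b
    have hax' : a ≤ x := hax.le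
    by_cases hstep : step = 0
    · -- then b = a, so x = a
      have hba : b = a := by
        have h1 : step * m = b - a := by
          rw [hstepdef]; exact div_mul_cancel₀ _ hm0'.ne'
        have h2 : (0:ℝ) * m = b - a := hstep ▸ h1
        rw [zero_mul] at h2
        linarith
      have hxa : x = a := le_antisymm (hba ▸ hxb) hax'
      subst hxa
      exact le_of_lt (lt_of_lt_of_le ha_pt (by linarith))
    · have hstep' : 0 < step := lt_of_le_of_ne hstep0 (Ne.symm hstep)
      set j : ℕ := ⌊(x - a) / step⌋₊ with hj
      set i : ℕ := min j (m - 1) with hi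
      have him : i + 1 ≤ m := by
        have : i ≤ m - 1 := min_le_right _ _
        omega
      have hi_mem : i ∈ Finset.range (m + 1) := Finset.mem_range.mpr (by omega)
      have hi1_mem : i + 1 ∈ Finset.range (m + 1) := Finset.mem_range.mpr (by omega)
      have hfloor_nonneg : (0:ℝ) ≤ (x - a) / step := div_nonneg (by linarith) hstep'.le
      have h_pi_le : p i ≤ x := by
        have h1 : (i : ℝ) ≤ (x - a) / step := by
          calc (i : ℝ) ≤ (j : ℝ) := by exact_mod_cast min_le_left _ _
            _ ≤ (x - a) / step := Nat.floor_le hfloor_nonneg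
        have := (le_div_iff₀ hstep').mp h1
        simp only [hp]; linarith
      have h_le_pi1 : x ≤ p (i + 1) := by
        rcases le_or_gt j (m - 1) with hjm | hjm
        · have hij : i = j := min_eq_left hjm
          have h1 : (x - a) / step < (j : ℝ) + 1 := Nat.lt_floor_add_one _
          have := (div_lt_iff₀ hstep').mp h1
          simp only [hp, hij]
          push_cast
          linarith
        · have hij : i = m - 1 := min_eq_right hjm.le
          have : i + 1 = m := by omega
          rw [this, hpm]
          exact hxb
      have hpi_mem : p i ∈ Set.Icc a b := hp_mem i (by omega)
      have hpi1_mem : p (i + 1) ∈ Set.Icc a b := hp_mem (i + 1) him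
      have hdist : dist (p (i + 1)) (p i) < δ := by
        have : p (i + 1) - p i = step := by simp only [hp]; push_cast; ring
        rw [Real.dist_eq, this, abs_of_nonneg hstep0]
        exact hstepδ
      have hFF : |F (p (i + 1)) - F (p i)| < ε / 4 := by
        have := hδ (p (i + 1)) hpi1_mem (p i) hpi_mem hdist
        rwa [Real.dist_eq] at this
      have h_i := abs_lt.mp (hn i hi_mem)
      have h_i1 := abs_lt.mp (hn (i + 1) hi1_mem)
      have hFF' := abs_lt.mp hFF
      have hgx1 : G x ≤ G (p (i + 1)) := hGmono h_le_pi1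
      have hgx2 : G (p i) ≤ G x := hGmono h_pi_le
      have hfx1 : F x ≤ F (p (i + 1)) := hFmono h_le_pi1
      have hfx2 : F (p i) ≤ F x := hFmono h_pi_le
      rw [abs_le]
      constructor <;> linarith [h_i.1, h_i.2, h_i1.1, h_i1.2, hFF'.1, hFF'.2]

/-- **Polya's theorem.** If `X_n → X` in distribution (expressed via pointwise
convergence of CDFs, which is equivalent since the CDF of `X` is continuous),
then the convergence of distribution functions is uniform:
`sup_{x ∈ ℝ} |F_{X_n}(x) − F_X(x)| → 0`. -/
theorem polya_uniform_convergence
    (μn : ℕ → Measure ℝ) (μ : Measure ℝ)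
    [∀ n, IsProbabilityMeasure (μn n)] [IsProbabilityMeasure μ]
    (hcont : Continuous (cdf μ))
    (h : ∀ x : ℝ, Tendsto (fun n => cdf (μn n) x) atTop (𝓝 (cdf μ x))) :
    Tendsto (fun n => ⨆ x : ℝ, |cdf (μn n) x - cdf μ x|) atTop (𝓝 0) := by
  rw [Metric.tendsto_atTop]
  intro ε hε
  have key := polya_key μn μ hcont h (show (0:ℝ) < ε/2 by linarith)
  obtain ⟨N, hN⟩ := eventually_atTop.mp key
  refine ⟨N, fun n hn => ?_⟩
  have hbdd : BddAbove (Set.range fun x : ℝ => |cdf (μn n) x - cdf μ x|) := by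
    refine ⟨2, ?_⟩
    rintro y ⟨x, rfl⟩
    have h1 := cdf_nonneg (μn n) x
    have h2 := cdf_le_one (μn n) x
    have h3 := cdf_nonneg μ x
    have h4 := cdf_le_one μ x
    rw [abs_le]; constructor <;> linarith
  have hsup_le : (⨆ x : ℝ, |cdf (μn n) x - cdf μ x|) ≤ ε / 2 :=
    ciSup_le (hN n hn)
  have hsup_nonneg : 0 ≤ ⨆ x : ℝ, |cdf (μn n) x - cdf μ x| :=
    le_trans (abs_nonneg _) (le_ciSup hbdd 0)
  rw [Real.dist_eq, sub_zero, abs_of_nonneg hsup_nonneg]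
  linarith
end

section
/- Let B be a random vector with law γ_V, let Λ be a symmetric positive semidefinite p × p matrix, let V^{1/2} be a matrix with V^{1/2}(V^{1/2})^T = V, and let λ_1, …, λ_p be the eigenvalues of the symmetric matrix (V^{1/2})^T Λ V^{1/2}. Then the real random variable B^T Λ B has the same distribution as Σ_{j=1}^p λ_j Z_j², where Z_1, …, Z_p are independent standard normal random variables. -/
open MeasureTheory ProbabilityTheory Matrix
open scoped ENNReal NNReal Topology

noncomputable section CramerWold

open Complex
open scoped FourierTransform RealInnerProductSpace ContDiff

namespace QFG

variable {V : Type*} [NormedAddCommGroup V] [InnerProductSpace ℝ V]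
  [MeasurableSpace V] [BorelSpace V] [FiniteDimensional ℝ V]

/-- Characteristic function of a measure on a finite-dimensional inner product space. -/
def charF (μ : Measure V) (t : V) : ℂ :=
  ∫ x, Complex.exp (↑⟪x, t⟫ * Complex.I) ∂μ

lemma norm_cexp_real_mul_I (r : ℝ) : ‖Complex.exp (↑r * Complex.I)‖ = 1 := by
  rw [Complex.norm_exp_ofReal_mul_I]

lemma continuous_cexp_real_mul_I : Continuous fun r : ℝ => Complex.exp (↑r * Complex.I) :=
  Complex.continuous_exp.comp (Complex.continuous_ofReal.mul continuous_const)

lemma integral_fourierIntegral (μ : Measure V) [IsProbabilityMeasure μ] (g : SchwartzMap V ℂ) :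
    ∫ x, 𝓕 (⇑g) x ∂μ = ∫ ξ, charF μ ((-(2 * Real.pi)) • ξ) * g ξ := by
  have hgc : Continuous fun p : V × V =>
      Complex.exp (↑(-2 * Real.pi * ⟪p.2, p.1⟫) * Complex.I) * g p.2 := by
    apply Continuous.mul
    · exact continuous_cexp_real_mul_I.comp
        (continuous_const.mul (continuous_inner.comp (continuous_snd.prodMk continuous_fst)))
    · exact g.continuous.comp continuous_snd
  have hInt : Integrable (fun q : V × V =>
      Complex.exp (↑(-2 * Real.pi * ⟪q.2, q.1⟫) * Complex.I) * g q.2) (μ.prod volume) := by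
    rw [integrable_prod_iff hgc.aestronglyMeasurable]
    constructor
    · filter_upwards with x
      apply (g.integrable).bdd_mul (c := 1)
      · exact (continuous_cexp_real_mul_I.comp
          (continuous_const.mul (continuous_inner.comp
            (continuous_id.prodMk continuous_const)))).aestronglyMeasurable
      · exact ae_of_all _ fun ξ => le_of_eq (norm_cexp_real_mul_I _)
    · have : (fun x : V => ∫ ξ : V, ‖Complex.exp (↑(-2 * Real.pi * ⟪ξ, x⟫) * Complex.I) * g ξ‖)
          = fun _ => ∫ ξ : V, ‖g ξ‖ := by
        funext x
        congr 1
        funext ξ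
        rw [norm_mul, norm_cexp_real_mul_I, one_mul]
      rw [this]
      exact integrable_const _
  have e1 : ∀ x, 𝓕 (⇑g) x = ∫ ξ, Complex.exp (↑(-2 * Real.pi * ⟪ξ, x⟫) * Complex.I) * g ξ := by
    intro x
    rw [Real.fourier_eq']
    congr 1
  have e2 : ∀ ξ x : V, Complex.exp (↑(-2 * Real.pi * ⟪ξ, x⟫) * Complex.I)
      = Complex.exp (↑⟪x, (-(2 * Real.pi)) • ξ⟫ * Complex.I) := by
    intro ξ x
    congr 1
    rw [real_inner_smul_right x ξ (-(2 * Real.pi)), real_inner_comm x ξ]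
    push_cast
    ring
  calc ∫ x, 𝓕 (⇑g) x ∂μ
      = ∫ x, ∫ ξ, Complex.exp (↑(-2 * Real.pi * ⟪ξ, x⟫) * Complex.I) * g ξ ∂volume ∂μ := by
        simp_rw [e1]
    _ = ∫ ξ, ∫ x, Complex.exp (↑(-2 * Real.pi * ⟪ξ, x⟫) * Complex.I) * g ξ ∂μ ∂volume :=
        integral_integral_swap hInt
    _ = ∫ ξ, charF μ ((-(2 * Real.pi)) • ξ) * g ξ := by
        congr 1
        funext ξ
        simp_rw [e2]
        rw [show (fun x => Complex.exp (↑⟪x, (-(2 * Real.pi)) • ξ⟫ * Complex.I) * g ξ)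
            = fun x => Complex.exp (↑⟪x, (-(2 * Real.pi)) • ξ⟫ * Complex.I) • g ξ by
          funext x; rw [smul_eq_mul], integral_smul_const]
        rw [smul_eq_mul]
        rfl

lemma integral_schwartz_eq (μ ν : Measure V) [IsProbabilityMeasure μ] [IsProbabilityMeasure ν]
    (h : ∀ t, charF μ t = charF ν t) (f : SchwartzMap V ℂ) :
    ∫ x, f x ∂μ = ∫ x, f x ∂ν := by
  have hfg : ⇑f = 𝓕 ⇑((SchwartzMap.fourierTransformCLE ℂ (SchwartzMap V ℂ)).symm f) := by
    conv_lhs => rw [← (SchwartzMap.fourierTransformCLE ℂ (SchwartzMap V ℂ)).apply_symm_apply f]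
    rfl
  rw [hfg, integral_fourierIntegral, integral_fourierIntegral]
  congr 1
  funext ξ
  rw [h]

/-- A smooth compactly supported function, as a complex-valued Schwartz map. -/
def ofCS (f : V → ℝ) (hf : ContDiff ℝ ∞ f) (h2 : HasCompactSupport f) : SchwartzMap V ℂ where
  toFun := fun x => (f x : ℂ)
  smooth' := Complex.ofRealCLM.contDiff.comp hf
  -- note: exponent ∞
  decay' := by
    intro k n
    have hF : ContDiff ℝ ∞ fun x : V => (f x : ℂ) := Complex.ofRealCLM.contDiff.comp hf
    have h2F : HasCompactSupport fun x : V => (f x : ℂ) :=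
      h2.comp_left (g := Complex.ofReal) Complex.ofReal_zero
    have h3 : HasCompactSupport fun x : V =>
        ‖x‖ ^ k * ‖iteratedFDeriv ℝ n (fun y : V => (f y : ℂ)) x‖ :=
      HasCompactSupport.mul_left ((h2F.iteratedFDeriv n).norm)
    have hc : Continuous fun x : V =>
        ‖x‖ ^ k * ‖iteratedFDeriv ℝ n (fun y : V => (f y : ℂ)) x‖ :=
      (continuous_norm.pow k).mul (hF.continuous_iteratedFDeriv (by exact_mod_cast (le_top : (n : ℕ∞) ≤ ⊤))).norm
    obtain ⟨C, hC⟩ := hc.bounded_above_of_compact_support h3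
    refine ⟨C, fun x => ?_⟩
    have := hC x
    rwa [Real.norm_of_nonneg (by positivity)] at this

lemma integral_smooth_cs_eq (μ ν : Measure V) [IsProbabilityMeasure μ] [IsProbabilityMeasure ν]
    (h : ∀ t, charF μ t = charF ν t) (f : V → ℝ)
    (hf : ContDiff ℝ ∞ f) (h2 : HasCompactSupport f) :
    ∫ x, f x ∂μ = ∫ x, f x ∂ν := by
  have := integral_schwartz_eq μ ν h (ofCS f hf h2)
  have hcoe : ∀ (ρ : Measure V), ∫ x, (ofCS f hf h2) x ∂ρ = ((∫ x, f x ∂ρ : ℝ) : ℂ) := by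
    intro ρ
    rw [show (fun x => (ofCS f hf h2) x) = fun x => ((f x : ℝ) : ℂ) from rfl]
    exact integral_ofReal
  rw [hcoe, hcoe] at this
  exact_mod_cast this

/-- Smooth Urysohn-type bump between a compact set and an open neighborhood. -/
lemma exists_smooth_bump {K U : Set V} (hK : IsCompact K) (hU : IsOpen U) (hKU : K ⊆ U) :
    ∃ g : V → ℝ, ContDiff ℝ ∞ g ∧ HasCompactSupport g ∧ Set.EqOn g 1 K ∧
      (∀ x, g x ∈ Set.Icc (0 : ℝ) 1) ∧ Function.support g ⊆ U := by
  obtain ⟨f, hf0, hf1, hf01⟩ :=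
    exists_contMDiffMap_zero_one_of_isClosed (modelWithCornersSelf ℝ V) (n := (⊤ : ℕ∞)) hU.isClosed_compl hK.isClosed
      (disjoint_compl_left.mono_right hKU)
  obtain ⟨r, hr⟩ := hK.isBounded.subset_closedBall 0
  set c : ContDiffBump (0 : V) :=
    ⟨max r 1, max r 1 + 1, lt_of_lt_of_le one_pos (le_max_right r 1), lt_add_one _⟩ with hc
  refine ⟨fun x => f x * c x, ?_, ?_, ?_, ?_, ?_⟩
  · exact (contMDiff_iff_contDiff.mp f.contMDiff).mul c.contDiff
  · exact c.hasCompactSupport.mul_left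
  · intro x hx
    have h1 : f x = 1 := hf1 hx
    have h2' : c x = 1 := c.one_of_mem_closedBall
      (Metric.closedBall_subset_closedBall (le_max_left r 1) (hr hx))
    simp only [Pi.one_apply, h1, h2', mul_one]
  · intro x
    exact ⟨mul_nonneg (hf01 x).1 c.nonneg, mul_le_one₀ (hf01 x).2 c.nonneg c.le_one⟩
  · intro x hx
    by_contra hxU
    have hfx : f x = 0 := hf0 hxU
    exact hx (show (fun x => f x * (c x : ℝ)) x = 0 by simp [hfx])

lemma measure_open_le (μ ν : Measure V) [IsProbabilityMeasure μ] [IsProbabilityMeasure ν]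
    (h : ∀ f : V → ℝ, ContDiff ℝ ∞ f → HasCompactSupport f →
      ∫ x, f x ∂μ = ∫ x, f x ∂ν)
    {U : Set V} (hU : IsOpen U) : μ U ≤ ν U := by
  by_cases hUuniv : U = Set.univ
  · rw [hUuniv]
    simp
  have hUc : (Uᶜ).Nonempty := Set.nonempty_compl.mpr hUuniv
  set K : ℕ → Set V := fun n =>
    {x | ((n : ℝ) + 1)⁻¹ ≤ Metric.infDist x Uᶜ} ∩ Metric.closedBall 0 ((n : ℝ) + 1) with hKdef
  have hKclosed : ∀ n, IsClosed (K n) := fun n =>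
    (isClosed_le continuous_const (Metric.continuous_infDist_pt _)).inter
      Metric.isClosed_closedBall
  have hKcomp : ∀ n, IsCompact (K n) := fun n =>
    (isCompact_closedBall 0 _).inter_left
      (isClosed_le continuous_const (Metric.continuous_infDist_pt _))
  have hKU : ∀ n, K n ⊆ U := by
    intro n x hx
    by_contra hxU
    have h0 : Metric.infDist x Uᶜ = 0 := Metric.infDist_zero_of_mem hxU
    have := hx.1
    rw [Set.mem_setOf_eq, h0] at this
    have hpos : (0 : ℝ) < ((n : ℝ) + 1)⁻¹ := by positivity
    linarith
  have hmono : Monotone K := by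
    intro m n hmn
    apply Set.inter_subset_inter
    · intro x hx
      have hx' : ((m : ℝ) + 1)⁻¹ ≤ Metric.infDist x Uᶜ := hx
      show ((n : ℝ) + 1)⁻¹ ≤ Metric.infDist x Uᶜ
      refine le_trans ?_ hx'
      apply inv_anti₀ (by positivity)
      exact_mod_cast add_le_add_left (Nat.cast_le.mpr hmn) 1
    · exact Metric.closedBall_subset_closedBall
        (by exact_mod_cast add_le_add_left (Nat.cast_le.mpr hmn) 1)
  have hUnion : U = ⋃ n, K n := by
    apply Set.Subset.antisymm
    · intro x hx
      have hd : 0 < Metric.infDist x Uᶜ :=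
        (hU.isClosed_compl.notMem_iff_infDist_pos hUc).mp (by simpa using hx)
      obtain ⟨n₁, hn₁⟩ := exists_nat_one_div_lt hd
      obtain ⟨n₂, hn₂⟩ := exists_nat_ge ‖x‖
      refine Set.mem_iUnion.mpr ⟨max n₁ n₂, ?_, ?_⟩
      · rw [Set.mem_setOf_eq]
        refine le_trans ?_ (le_of_lt hn₁)
        rw [one_div]
        apply inv_anti₀ (by positivity)
        have : (n₁ : ℝ) ≤ (max n₁ n₂ : ℕ) := by exact_mod_cast le_max_left n₁ n₂
        linarith
      · rw [Metric.mem_closedBall, dist_zero_right]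
        have : (n₂ : ℝ) ≤ (max n₁ n₂ : ℕ) := by exact_mod_cast le_max_right n₁ n₂
        linarith
    · exact Set.iUnion_subset hKU
  have hμU : μ U = ⨆ n, μ (K n) := by
    conv_lhs => rw [hUnion]
    exact hmono.measure_iUnion
  rw [hμU]
  apply iSup_le
  intro n
  obtain ⟨g, hg1, hg2, hgK, hg01, hgsupp⟩ := exists_smooth_bump (hKcomp n) hU (hKU n)
  have hgintμ : Integrable g μ := hg1.continuous.integrable_of_hasCompactSupport hg2
  have hgintν : Integrable g ν := hg1.continuous.integrable_of_hasCompactSupport hg2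
  have h1 : (μ (K n)).toReal ≤ ∫ x, g x ∂μ := by
    have : (μ (K n)).toReal = ∫ x, (K n).indicator (fun _ => (1 : ℝ)) x ∂μ := by
      rw [integral_indicator_const (1 : ℝ) (hKclosed n).measurableSet, smul_eq_mul, mul_one, measureReal_def]
    rw [this]
    apply integral_mono ((integrable_const (1 : ℝ)).indicator (hKclosed n).measurableSet) hgintμ
    intro x
    by_cases hx : x ∈ K n
    · rw [Set.indicator_of_mem hx]
      exact le_of_eq (hgK hx).symm
    · rw [Set.indicator_of_notMem hx]
      exact (hg01 x).1
  have h2 : ∫ x, g x ∂ν ≤ (ν U).toReal := by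
    have : (ν U).toReal = ∫ x, U.indicator (fun _ => (1 : ℝ)) x ∂ν := by
      rw [integral_indicator_const (1 : ℝ) hU.measurableSet, smul_eq_mul, mul_one, measureReal_def]
    rw [this]
    apply integral_mono hgintν ((integrable_const (1 : ℝ)).indicator hU.measurableSet)
    intro x
    by_cases hx : x ∈ U
    · rw [Set.indicator_of_mem hx]
      exact (hg01 x).2
    · rw [Set.indicator_of_notMem hx]
      have : g x = 0 := by
        by_contra hne
        exact hx (hgsupp hne)
      rw [this]
  have hle : (μ (K n)).toReal ≤ (ν U).toReal := by
    calc (μ (K n)).toReal ≤ ∫ x, g x ∂μ := h1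
      _ = ∫ x, g x ∂ν := h g hg1 hg2
      _ ≤ (ν U).toReal := h2
  exact (ENNReal.toReal_le_toReal (measure_ne_top μ _) (measure_ne_top ν _)).mp hle

theorem ext_of_charF (μ ν : Measure V) [IsProbabilityMeasure μ] [IsProbabilityMeasure ν]
    (h : ∀ t, charF μ t = charF ν t) : μ = ν := by
  have hsymm : ∀ t, charF ν t = charF μ t := fun t => (h t).symm
  have hint : ∀ f : V → ℝ, ContDiff ℝ ∞ f → HasCompactSupport f →
      ∫ x, f x ∂μ = ∫ x, f x ∂ν := fun f hf h2 => integral_smooth_cs_eq μ ν h f hf h2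
  have hint' : ∀ f : V → ℝ, ContDiff ℝ ∞ f → HasCompactSupport f →
      ∫ x, f x ∂ν = ∫ x, f x ∂μ := fun f hf h2 => (hint f hf h2).symm
  apply MeasureTheory.ext_of_generate_finite {s : Set V | IsOpen s}
    (BorelSpace.measurable_eq (α := V)) isPiSystem_isOpen
  · intro s hs
    exact le_antisymm (measure_open_le μ ν hint hs) (measure_open_le ν μ hint' hs)
  · rw [measure_univ, measure_univ]

end QFG

end CramerWold

/-- `μ` is the centered multivariate Gaussian measure `γ_V` on `ℝ^p` with covariance
matrix `V`: every one-dimensional linear projection `x ↦ l ⬝ᵥ x` is a centered real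
Gaussian with variance `lᵀ V l`. -/
def IsCenteredGaussian {p : ℕ} (V : Matrix (Fin p) (Fin p) ℝ)
    (μ : Measure (Fin p → ℝ)) : Prop :=
  ∀ l : Fin p → ℝ,
    μ.map (fun x => l ⬝ᵥ x) = gaussianReal 0 (Real.toNNReal (l ⬝ᵥ V.mulVec l))

/-- The law of `p` i.i.d. standard normal random variables `(Z_1, …, Z_p)`. -/
noncomputable def stdGaussianPi (p : ℕ) : Measure (Fin p → ℝ) :=
  Measure.pi fun _ => gaussianReal 0 1

/-- The chi-square distribution with `k` degrees of freedom: the law of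
`Z_1² + ⋯ + Z_k²` for i.i.d. standard normals `Z_i`. -/
noncomputable def chiSq (k : ℕ) : Measure ℝ :=
  (stdGaussianPi k).map (fun z => ∑ i, (z i) ^ 2)

/-- The `α`-quantile of a distribution `ν` on `ℝ`: the smallest `c` with
`ν (Iic c) ≥ α`. -/
noncomputable def quantile (ν : Measure ℝ) (α : ℝ) : ℝ :=
  sInf {c : ℝ | ENNReal.ofReal α ≤ ν (Set.Iic c)}

noncomputable section Part2

open Complex
open scoped RealInnerProductSpace

namespace QFG

lemma integral_pi_prod : ∀ {n : ℕ} (μ : Fin n → Measure ℝ)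
    (_ : ∀ i, IsProbabilityMeasure (μ i)) (f : Fin n → ℝ → ℂ),
    ∫ x : Fin n → ℝ, ∏ i, f i (x i) ∂(Measure.pi μ) = ∏ i, ∫ x, f i x ∂(μ i) := by
  intro n
  induction n with
  | zero =>
      intro μ hI f
      haveI := hI
      simp [integral_const, Measure.pi_univ]
  | succ n ih =>
      intro μ hI f
      haveI := hI
      haveI : ∀ i : Fin n, IsProbabilityMeasure (μ i.succ) := fun i => hI _
      calc ∫ x : Fin (n + 1) → ℝ, ∏ i, f i (x i) ∂(Measure.pi μ)
          = ∫ q : ℝ × (Fin n → ℝ), f 0 q.1 * ∏ i : Fin n, f i.succ (q.2 i)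
              ∂((μ 0).prod (Measure.pi fun i => μ i.succ)) := by
            rw [← ((measurePreserving_piFinSuccAbove μ 0).symm).integral_comp']
            simp_rw [MeasurableEquiv.piFinSuccAbove_symm_apply, Fin.insertNthEquiv,
              Fin.prod_univ_succ, Fin.insertNth_zero, Equiv.coe_fn_mk, Fin.cons_succ,
              Fin.zero_succAbove, cast_eq, Fin.cons_zero]
        _ = (∫ x, f 0 x ∂(μ 0)) * ∏ i : Fin n, ∫ x, f i.succ x ∂(μ i.succ) := by
            rw [← ih (fun i => μ i.succ) (fun i => hI _) (fun i => f i.succ),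
              ← integral_prod_mul]
        _ = ∏ i, ∫ x, f i x ∂(μ i) :=
            (Fin.prod_univ_succ (fun i => ∫ x, f i x ∂(μ i))).symm

lemma ext_of_rchar (μ ν : Measure ℝ) [IsProbabilityMeasure μ] [IsProbabilityMeasure ν]
    (h : ∀ t : ℝ, ∫ x, Complex.exp (↑(t * x) * Complex.I) ∂μ
      = ∫ x, Complex.exp (↑(t * x) * Complex.I) ∂ν) : μ = ν := by
  apply ext_of_charF
  intro t
  unfold charF
  have hi : ∀ x : ℝ, ⟪x, t⟫ = t * x := by
    intro x
    rw [RCLike.inner_apply]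
    simp [mul_comm]
  simp_rw [hi]
  exact h t

variable {p : ℕ}

lemma ext_of_pichar (μ ν : Measure (Fin p → ℝ)) [IsProbabilityMeasure μ]
    [IsProbabilityMeasure ν]
    (h : ∀ t : Fin p → ℝ, ∫ x, Complex.exp (↑(t ⬝ᵥ x) * Complex.I) ∂μ
      = ∫ x, Complex.exp (↑(t ⬝ᵥ x) * Complex.I) ∂ν) : μ = ν := by
  set e := (MeasurableEquiv.toLp 2 (Fin p → ℝ)).symm with he
  haveI : IsProbabilityMeasure (μ.map ⇑e.symm) :=
    Measure.isProbabilityMeasure_map e.symm.measurable.aemeasurable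
  haveI : IsProbabilityMeasure (ν.map ⇑e.symm) :=
    Measure.isProbabilityMeasure_map e.symm.measurable.aemeasurable
  have hcont : ∀ t : EuclideanSpace ℝ (Fin p),
      Continuous fun y : EuclideanSpace ℝ (Fin p) => Complex.exp (↑⟪y, t⟫ * Complex.I) :=
    fun t => continuous_cexp_real_mul_I.comp
      (continuous_inner.comp (continuous_id.prodMk continuous_const))
  have key : μ.map ⇑e.symm = ν.map ⇑e.symm := by
    apply ext_of_charF
    intro t
    unfold charF
    rw [integral_map e.symm.measurable.aemeasurable (hcont t).aestronglyMeasurable,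
        integral_map e.symm.measurable.aemeasurable (hcont t).aestronglyMeasurable]
    have hin : ∀ x : Fin p → ℝ, ⟪(⇑e.symm x : EuclideanSpace ℝ (Fin p)), t⟫ = (⇑e t) ⬝ᵥ x := by
      intro x
      rw [PiLp.inner_apply]
      simp only [RCLike.inner_apply, starRingEnd_apply, star_trivial]
      rw [dotProduct]
      apply Finset.sum_congr rfl
      intro i _
      have h1 : (⇑e.symm x : EuclideanSpace ℝ (Fin p)) i = x i := rfl
      have h2 : (⇑e t) i = t i := rfl
      rw [h1, h2, mul_comm]
    simp_rw [hin]
    exact h (⇑e t)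
  have := congrArg (Measure.map ⇑e) key
  rwa [Measure.map_map e.measurable e.symm.measurable,
       Measure.map_map e.measurable e.symm.measurable,
       MeasurableEquiv.self_comp_symm, Measure.map_id, Measure.map_id] at this

lemma rchar_gaussianReal (v : ℝ≥0) (t : ℝ) :
    ∫ x, Complex.exp (↑(t * x) * Complex.I) ∂(gaussianReal 0 v)
      = Complex.exp (((-(v : ℝ) * t ^ 2 / 2 : ℝ) : ℂ)) := by
  rcases eq_or_ne v 0 with hv | hv
  · subst hv
    rw [gaussianReal_zero_var, integral_dirac]
    norm_num [Complex.exp_zero]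
  · have hvr : (0 : ℝ) < (v : ℝ) := NNReal.coe_pos.mpr (pos_iff_ne_zero.mpr hv)
    have h2piv : (0 : ℝ) < 2 * Real.pi * (v : ℝ) := by positivity
    have hsqrt : (0 : ℝ) < Real.sqrt (2 * Real.pi * (v : ℝ)) := Real.sqrt_pos.mpr h2piv
    rw [gaussianReal_of_var_ne_zero _ hv]
    have hd : volume.withDensity (gaussianPDF 0 v)
        = volume.withDensity (fun x => ((Real.toNNReal (gaussianPDFReal 0 v x) : ℝ≥0) : ℝ≥0∞)) := by
      rfl
    rw [hd, integral_withDensity_eq_integral_smul ((measurable_gaussianPDFReal 0 v).real_toNNReal)]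
    have hb : (0 : ℝ) < ((((1 : ℝ) / (2 * (v : ℝ))) : ℝ) : ℂ).re := by
      rw [Complex.ofReal_re]
      positivity
    have key : ∀ x : ℝ, (Real.toNNReal (gaussianPDFReal 0 v x))
          • Complex.exp (↑(t * x) * Complex.I)
        = ((Real.sqrt (2 * Real.pi * (v : ℝ)) : ℝ) : ℂ)⁻¹
            * (Complex.exp (Complex.I * (t : ℂ) * (x : ℂ))
              * Complex.exp (-((((1 : ℝ) / (2 * (v : ℝ))) : ℝ) : ℂ) * (x : ℂ) ^ 2)) := by
      intro x
      rw [NNReal.smul_def, Real.coe_toNNReal _ (gaussianPDFReal_nonneg 0 v x)]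
      rw [Complex.real_smul, gaussianPDFReal_def]
      rw [Complex.ofReal_mul, Complex.ofReal_inv, Complex.ofReal_exp, mul_assoc]
      congr 1
      rw [mul_comm]
      congr 1
      · congr 1
        push_cast
        ring
      · congr 1
        push_cast
        ring
    simp_rw [key]
    rw [integral_const_mul, fourierIntegral_gaussian hb (t : ℂ)]
    have hc1 : ((Real.pi : ℂ) / ((((1 : ℝ) / (2 * (v : ℝ))) : ℝ) : ℂ)) ^ (1 / 2 : ℂ)
        = ((Real.sqrt (2 * Real.pi * (v : ℝ)) : ℝ) : ℂ) := by
      have e1 : ((Real.pi : ℂ) / ((((1 : ℝ) / (2 * (v : ℝ))) : ℝ) : ℂ))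
          = (((2 * Real.pi * (v : ℝ)) : ℝ) : ℂ) := by
        push_cast
        field_simp
      rw [e1, Real.sqrt_eq_rpow, Complex.ofReal_cpow (le_of_lt h2piv) (1 / 2)]
      norm_num
    rw [hc1, ← mul_assoc, inv_mul_cancel₀ (by exact_mod_cast hsqrt.ne'), one_mul]
    congr 1
    push_cast
    field_simp
    ring

instance stdGaussianPi_isProbability : IsProbabilityMeasure (stdGaussianPi p) := by
  unfold stdGaussianPi
  infer_instance

lemma pichar_std (t : Fin p → ℝ) :
    ∫ x, Complex.exp (↑(t ⬝ᵥ x) * Complex.I) ∂(stdGaussianPi p)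
      = Complex.exp (((-(t ⬝ᵥ t) / 2 : ℝ) : ℂ)) := by
  have h1 : ∀ x : Fin p → ℝ, Complex.exp (↑(t ⬝ᵥ x) * Complex.I)
      = ∏ i, Complex.exp (↑(t i * x i) * Complex.I) := by
    intro x
    rw [← Complex.exp_sum]
    congr 1
    rw [dotProduct]
    push_cast
    rw [Finset.sum_mul]
  simp_rw [h1]
  unfold stdGaussianPi
  rw [integral_pi_prod (fun _ => gaussianReal 0 1) (fun _ => inferInstance)
      (fun i s => Complex.exp (↑(t i * s) * Complex.I))]
  have h2 : ∀ i : Fin p, ∫ x : ℝ, Complex.exp (↑(t i * x) * Complex.I) ∂(gaussianReal 0 1)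
      = Complex.exp (((-(1 : ℝ) * (t i) ^ 2 / 2 : ℝ) : ℂ)) := by
    intro i
    have := rchar_gaussianReal 1 (t i)
    simpa using this
  rw [Finset.prod_congr rfl fun i _ => h2 i, ← Complex.exp_sum]
  congr 1
  rw [← Complex.ofReal_sum]
  congr 1
  rw [dotProduct]
  calc ∑ i, -(1 : ℝ) * t i ^ 2 / 2
      = ∑ i, -(t i * t i) / 2 := Finset.sum_congr rfl fun i _ => by ring
    _ = (∑ i, -(t i * t i)) / 2 := by rw [Finset.sum_div]
    _ = -(∑ i, t i * t i) / 2 := by rw [Finset.sum_neg_distrib]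

lemma continuous_dotfun (t : Fin p → ℝ) : Continuous fun x : Fin p → ℝ => t ⬝ᵥ x := by
  simp only [dotProduct]
  exact continuous_finset_sum _ fun i _ => continuous_const.mul (continuous_apply i)

lemma measurable_dotfun (t : Fin p → ℝ) : Measurable fun x : Fin p → ℝ => t ⬝ᵥ x :=
  (continuous_dotfun t).measurable

lemma continuous_cexp_dot (t : Fin p → ℝ) :
    Continuous fun x : Fin p → ℝ => Complex.exp (↑(t ⬝ᵥ x) * Complex.I) :=
  continuous_cexp_real_mul_I.comp (continuous_dotfun t)

lemma continuous_cexp_mul (t : ℝ) :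
    Continuous fun x : ℝ => Complex.exp (↑(t * x) * Complex.I) :=
  continuous_cexp_real_mul_I.comp (continuous_const.mul continuous_id)

lemma continuous_mulVecFun (A : Matrix (Fin p) (Fin p) ℝ) :
    Continuous fun z : Fin p → ℝ => A.mulVec z := by
  apply continuous_pi
  intro i
  simp only [Matrix.mulVec, dotProduct]
  exact continuous_finset_sum _ fun j _ => continuous_const.mul (continuous_apply j)

lemma map_dotProduct (a : Fin p → ℝ) :
    (stdGaussianPi p).map (fun z => a ⬝ᵥ z) = gaussianReal 0 (Real.toNNReal (a ⬝ᵥ a)) := by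
  haveI : IsProbabilityMeasure ((stdGaussianPi p).map (fun z => a ⬝ᵥ z)) :=
    Measure.isProbabilityMeasure_map (measurable_dotfun a).aemeasurable
  apply ext_of_rchar
  intro t
  rw [integral_map (measurable_dotfun a).aemeasurable
    ((continuous_cexp_mul t).aestronglyMeasurable)]
  have h1 : ∀ z : Fin p → ℝ, Complex.exp (↑(t * (a ⬝ᵥ z)) * Complex.I)
      = Complex.exp (↑((t • a) ⬝ᵥ z) * Complex.I) := by
    intro z
    rw [smul_dotProduct, smul_eq_mul]
  simp_rw [h1]
  rw [pichar_std (t • a), rchar_gaussianReal]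
  congr 1
  have hnn : (0 : ℝ) ≤ a ⬝ᵥ a := Finset.sum_nonneg fun i _ => mul_self_nonneg _
  norm_cast
  rw [Real.coe_toNNReal _ hnn, smul_dotProduct, dotProduct_smul,
    smul_eq_mul, smul_eq_mul]
  ring

lemma map_mulVec_std (A : Matrix (Fin p) (Fin p) ℝ) (hA : A * Aᵀ = 1) :
    (stdGaussianPi p).map (fun z => A.mulVec z) = stdGaussianPi p := by
  haveI : IsProbabilityMeasure ((stdGaussianPi p).map (fun z => A.mulVec z)) :=
    Measure.isProbabilityMeasure_map (continuous_mulVecFun A).measurable.aemeasurable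
  apply ext_of_pichar
  intro t
  rw [integral_map (continuous_mulVecFun A).measurable.aemeasurable
    (continuous_cexp_dot t).aestronglyMeasurable]
  have h1 : ∀ z : Fin p → ℝ, Complex.exp (↑(t ⬝ᵥ A.mulVec z) * Complex.I)
      = Complex.exp (↑((Aᵀ.mulVec t) ⬝ᵥ z) * Complex.I) := by
    intro z
    rw [Matrix.dotProduct_mulVec, Matrix.mulVec_transpose]
  simp_rw [h1]
  rw [pichar_std, pichar_std]
  have h2 : (Aᵀ.mulVec t) ⬝ᵥ (Aᵀ.mulVec t) = t ⬝ᵥ t := by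
    have hh : Aᵀ.mulVec t = Matrix.vecMul t A := Matrix.mulVec_transpose A t
    rw [hh, ← Matrix.dotProduct_mulVec t A, ← hh, Matrix.mulVec_mulVec, hA,
      Matrix.one_mulVec]
  rw [h2]

lemma map_integral_cexp (ρ : Measure (Fin p → ℝ)) (t : Fin p → ℝ) :
    ∫ s, Complex.exp (↑s * Complex.I) ∂(ρ.map (fun x => t ⬝ᵥ x))
      = ∫ x, Complex.exp (↑(t ⬝ᵥ x) * Complex.I) ∂ρ := by
  rw [integral_map (measurable_dotfun t).aemeasurable
    continuous_cexp_real_mul_I.aestronglyMeasurable]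

end QFG

end Part2

noncomputable section Final

open QFG

/-- If `B ~ γ_V`, `Λ` is symmetric positive semidefinite, `V^{1/2}` satisfies
`V^{1/2} (V^{1/2})ᵀ = V`, and `λ_1, …, λ_p` are the eigenvalues of the symmetric
matrix `(V^{1/2})ᵀ Λ V^{1/2}`, then `Bᵀ Λ B` has the same distribution as
`∑ j, λ_j Z_j²` for i.i.d. standard normals `Z_j`. -/
theorem quadratic_form_gaussian_distribution
    {p : ℕ} (V Λ : Matrix (Fin p) (Fin p) ℝ) (hV : V.PosDef) (hΛ : Λ.PosSemidef)
    (Vh : Matrix (Fin p) (Fin p) ℝ) (hVh : Vh * Vhᵀ = V)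
    (hP : (Vhᵀ * Λ * Vh).IsHermitian)
    (μ : Measure (Fin p → ℝ)) [IsProbabilityMeasure μ]
    (hμ : IsCenteredGaussian V μ) :
    μ.map (fun x => x ⬝ᵥ Λ.mulVec x)
      = (stdGaussianPi p).map (fun z => ∑ j, hP.eigenvalues j * (z j) ^ 2) := by
  classical
  set M : Matrix (Fin p) (Fin p) ℝ := Vhᵀ * Λ * Vh with hM
  haveI : IsProbabilityMeasure ((stdGaussianPi p).map (fun z => Vh.mulVec z)) :=
    Measure.isProbabilityMeasure_map (continuous_mulVecFun Vh).measurable.aemeasurable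
  -- the image measure is centered Gaussian with covariance V
  have hVdot : ∀ l : Fin p → ℝ, (Vhᵀ.mulVec l) ⬝ᵥ (Vhᵀ.mulVec l) = l ⬝ᵥ V.mulVec l := by
    intro l
    have h1 : Vhᵀ.mulVec l = Matrix.vecMul l Vh := Matrix.mulVec_transpose Vh l
    rw [h1, ← Matrix.dotProduct_mulVec l Vh, ← h1, Matrix.mulVec_mulVec, hVh]
  have hstep2 : ∀ l : Fin p → ℝ,
      ((stdGaussianPi p).map (fun z => Vh.mulVec z)).map (fun x => l ⬝ᵥ x)
        = gaussianReal 0 (Real.toNNReal (l ⬝ᵥ V.mulVec l)) := by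
    intro l
    rw [Measure.map_map (measurable_dotfun l) (continuous_mulVecFun Vh).measurable]
    have hcomp : ((fun x => l ⬝ᵥ x) ∘ fun z : Fin p → ℝ => Vh.mulVec z)
        = fun z => (Vhᵀ.mulVec l) ⬝ᵥ z := by
      funext z
      simp only [Function.comp_apply]
      rw [Matrix.dotProduct_mulVec, Matrix.mulVec_transpose]
    rw [hcomp, map_dotProduct, hVdot]
  -- μ equals the image measure
  have hμν : μ = (stdGaussianPi p).map (fun z => Vh.mulVec z) := by
    apply ext_of_pichar
    intro t
    rw [← map_integral_cexp μ t, ← map_integral_cexp _ t, hμ t, hstep2 t]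
  -- push forward the quadratic form
  have hqc : Continuous fun x : Fin p → ℝ => x ⬝ᵥ Λ.mulVec x := by
    simp only [dotProduct]
    exact continuous_finset_sum _ fun i _ =>
      (continuous_apply i).mul ((continuous_apply i).comp (continuous_mulVecFun Λ))
  have hq1 : ∀ z : Fin p → ℝ, (Vh.mulVec z) ⬝ᵥ Λ.mulVec (Vh.mulVec z) = z ⬝ᵥ M.mulVec z := by
    intro z
    rw [hM, Matrix.mul_assoc, ← Matrix.mulVec_mulVec, Matrix.dotProduct_mulVec _ Vhᵀ,
      Matrix.vecMul_transpose, ← Matrix.mulVec_mulVec]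
  -- spectral decomposition
  set S : Matrix (Fin p) (Fin p) ℝ := (hP.eigenvectorUnitary : Matrix (Fin p) (Fin p) ℝ)
    with hSdef
  have hstar : star S = Sᵀ := by
    ext i j
    simp [Matrix.star_eq_conjTranspose, Matrix.conjTranspose_apply]
  have hofReal : RCLike.ofReal ∘ hP.eigenvalues = hP.eigenvalues := by
    funext i
    simp
  have hspec : M = S * Matrix.diagonal hP.eigenvalues * Sᵀ := by
    have := hP.spectral_theorem
    rw [hofReal, Unitary.conjStarAlgAut_apply, ← hSdef, hstar] at this
    exact this
  have hunit : Sᵀ * S = 1 := by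
    rw [← hstar]
    exact (Matrix.mem_unitaryGroup_iff'.mp hP.eigenvectorUnitary.2)
  have hdiagdot : ∀ (d w : Fin p → ℝ), w ⬝ᵥ (Matrix.diagonal d).mulVec w = ∑ j, d j * w j ^ 2 := by
    intro d w
    simp only [dotProduct, Matrix.mulVec_diagonal]
    exact Finset.sum_congr rfl fun j _ => by ring
  have hq2 : ∀ z : Fin p → ℝ, z ⬝ᵥ M.mulVec z
      = ∑ j, hP.eigenvalues j * (Sᵀ.mulVec z) j ^ 2 := by
    intro z
    have key : z ⬝ᵥ (S * Matrix.diagonal hP.eigenvalues * Sᵀ).mulVec z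
        = ∑ j, hP.eigenvalues j * (Sᵀ.mulVec z) j ^ 2 := by
      rw [Matrix.mul_assoc, ← Matrix.mulVec_mulVec, Matrix.dotProduct_mulVec z S,
        ← Matrix.mulVec_transpose, ← Matrix.mulVec_mulVec, hdiagdot]
    rw [← hspec] at key
    exact key
  have hfc : Continuous fun w : Fin p → ℝ => ∑ j, hP.eigenvalues j * w j ^ 2 :=
    continuous_finset_sum _ fun j _ => continuous_const.mul ((continuous_apply j).pow 2)
  calc μ.map (fun x => x ⬝ᵥ Λ.mulVec x)
      = ((stdGaussianPi p).map (fun z => Vh.mulVec z)).map (fun x => x ⬝ᵥ Λ.mulVec x) := by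
        rw [← hμν]
    _ = (stdGaussianPi p).map ((fun x => x ⬝ᵥ Λ.mulVec x) ∘ fun z => Vh.mulVec z) :=
        Measure.map_map hqc.measurable (continuous_mulVecFun Vh).measurable
    _ = (stdGaussianPi p).map ((fun w => ∑ j, hP.eigenvalues j * w j ^ 2)
          ∘ fun z => Sᵀ.mulVec z) := by
        congr 1
        funext z
        simp only [Function.comp_apply]
        rw [hq1 z, hq2 z]
    _ = ((stdGaussianPi p).map (fun z => Sᵀ.mulVec z)).map
          (fun w => ∑ j, hP.eigenvalues j * w j ^ 2) :=
        (Measure.map_map hfc.measurable (continuous_mulVecFun Sᵀ).measurable).symm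
    _ = (stdGaussianPi p).map (fun z => ∑ j, hP.eigenvalues j * (z j) ^ 2) := by
        rw [map_mulVec_std Sᵀ (by rw [Matrix.transpose_transpose]; exact hunit)]

end Final
end

section
/- Let B be a random vector with law γ_V, let β ∈ ℝ^p satisfy β^T V β > 0, and let α ∈ (0,1). Define the acceptance region 𝓑* = {x ∈ ℝ^p : (β^T x)² ≤ β^T V β · ξ_{α,1}}. Then γ_V(𝓑*) = α, and for every measurable set 𝓑 ⊆ ℝ^p with γ_V(𝓑) = α one has E[(β^T B)² | B ∈ 𝓑*] ≤ E[(β^T B)² | B ∈ 𝓑]. In other words, among all acceptance regions of Gaussian measure α, the slab 𝓑* minimizes the conditional second moment of β^T B. -/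
open MeasureTheory ProbabilityTheory Matrix
open scoped ENNReal NNReal Topology

/- Auxiliary lemmas -/

lemma integrable_sq_gaussianReal (v : ℝ≥0) (hv : v ≠ 0) :
    Integrable (fun y : ℝ => y ^ 2) (gaussianReal 0 v) := by
  rw [gaussianReal_of_var_ne_zero _ hv,
    integrable_withDensity_iff (measurable_gaussianPDF _ _)
      (Filter.Eventually.of_forall fun x => ENNReal.ofReal_lt_top)]
  simp_rw [gaussianPDF, ENNReal.toReal_ofReal (gaussianPDFReal_nonneg _ _ _),
    gaussianPDFReal, sub_zero]
  have hb : (0 : ℝ) < (2 * (v : ℝ))⁻¹ := by positivity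
  have H : Integrable (fun x : ℝ => (Real.sqrt (2 * Real.pi * v))⁻¹ *
      (x ^ ((2:ℕ):ℝ) * Real.exp (-(2 * (v:ℝ))⁻¹ * x ^ 2))) volume :=
    (integrable_rpow_mul_exp_neg_mul_sq hb (by norm_num : (-1:ℝ) < ((2:ℕ):ℝ))).const_mul _
  refine H.congr (Filter.Eventually.of_forall fun x => ?_)
  simp only [Real.rpow_natCast]
  ring_nf

lemma levelSet_integral_le {X : Type*} [MeasurableSpace X] (ν : Measure X) [IsFiniteMeasure ν]
    {f : X → ℝ} (hf : Measurable f) (hInt : Integrable f ν) (c : ℝ)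
    {A : Set X} (hA : MeasurableSet A) (hmeq : ν {x | f x ≤ c} = ν A) :
    ∫ x in {x | f x ≤ c}, f x ∂ν ≤ ∫ x in A, f x ∂ν := by
  set S : Set X := {x | f x ≤ c} with hSdef
  have hS : MeasurableSet S := measurableSet_le hf measurable_const
  have hIS : IntegrableOn f S ν := hInt.integrableOn
  have hIA : IntegrableOn f A ν := hInt.integrableOn
  have hdecS : ∫ x in S ∩ A, f x ∂ν + ∫ x in S \ A, f x ∂ν = ∫ x in S, f x ∂ν :=
    integral_inter_add_diff hA hIS
  have hdecA : ∫ x in A ∩ S, f x ∂ν + ∫ x in A \ S, f x ∂ν = ∫ x in A, f x ∂ν :=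
    integral_inter_add_diff hS hIA
  have hm1 : ν (S \ A) + ν (S ∩ A) = ν S := measure_diff_add_inter S hA
  have hm2 : ν (A \ S) + ν (A ∩ S) = ν A := measure_diff_add_inter A hS
  have hmdiff : ν (S \ A) = ν (A \ S) := by
    rw [Set.inter_comm A S] at hm2
    have := hm1.trans (hmeq.trans hm2.symm)
    exact (ENNReal.cancel_of_ne (measure_ne_top ν _)).inj_left.mp this
  have key1 : ∫ x in S \ A, f x ∂ν ≤ c * (ν (S \ A)).toReal := by
    have := setIntegral_mono_on (hIS.mono_set Set.diff_subset)
      (integrableOn_const (measure_ne_top ν _))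
      (hS.diff hA) (fun x hx => hx.1)
    simpa [mul_comm, Measure.real] using this
  have key2 : c * (ν (A \ S)).toReal ≤ ∫ x in A \ S, f x ∂ν := by
    have := setIntegral_mono_on (integrableOn_const (measure_ne_top ν _))
      (hIA.mono_set Set.diff_subset)
      (hA.diff hS) (fun x hx => (not_le.1 hx.2).le)
    simpa [mul_comm, Measure.real] using this
  have hinter : ∫ x in S ∩ A, f x ∂ν = ∫ x in A ∩ S, f x ∂ν := by rw [Set.inter_comm]
  rw [hmdiff] at key1
  linarith

lemma measurableSet_sq_le (c : ℝ) : MeasurableSet {y : ℝ | y ^ 2 ≤ c} :=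
  measurableSet_le (measurable_id.pow_const 2) measurable_const

lemma gaussianReal_sq_le (v : ℝ) (hv : 0 < v) (t : ℝ) :
    gaussianReal 0 (Real.toNNReal v) {y | y ^ 2 ≤ v * t} = gaussianReal 0 1 {y | y ^ 2 ≤ t} := by
  set σ : ℝ := Real.sqrt v with hσdef
  have hσ2 : σ ^ 2 = v := Real.sq_sqrt hv.le
  have hmap : (gaussianReal 0 1).map (fun y => σ * y) = gaussianReal 0 (Real.toNNReal v) := by
    have := gaussianReal_map_const_mul (μ := 0) (v := 1) σ
    rw [this]
    congr 1
    · ring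
    · ext
      simp [hσ2, Real.coe_toNNReal _ hv.le]
  rw [← hmap, Measure.map_apply (by fun_prop : Measurable fun y : ℝ => σ * y) (measurableSet_sq_le _)]
  congr 1
  ext z
  simp only [Set.mem_preimage, Set.mem_setOf_eq, mul_pow, hσ2]
  exact mul_le_mul_iff_right₀ hv

lemma chiSq_one_Iic (t : ℝ) : chiSq 1 (Set.Iic t) = gaussianReal 0 1 {y : ℝ | y ^ 2 ≤ t} := by
  rw [chiSq, Measure.map_apply (by fun_prop) measurableSet_Iic]
  have hset : (fun z : Fin 1 → ℝ => ∑ i, (z i) ^ 2) ⁻¹' Set.Iic t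
      = Set.univ.pi (fun _ : Fin 1 => {y : ℝ | y ^ 2 ≤ t}) := by
    ext z
    simp [Fin.sum_univ_one, Fin.forall_fin_one]
  rw [hset, stdGaussianPi, Measure.pi_pi]
  simp

/-- **The slab is the optimal acceptance region for a known direction `β`.**
Let `B ~ γ_V`, `β` with `βᵀ V β > 0`, `α ∈ (0,1)`, and `ξ_{α,1}` the `α`-quantile of
`χ²_1` (the unique `ξ > 0` with `P(χ²_1 ≤ ξ) = α`). Then the slab
`𝓑* = {x | (βᵀ x)² ≤ βᵀ V β ⬝ ξ_{α,1}}` has `γ_V`-measure `α`, and among all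
measurable acceptance regions of `γ_V`-measure `α` it minimizes the conditional
second moment of `βᵀ B`. -/
theorem slab_minimizes_conditional_second_moment
    {p : ℕ} (V : Matrix (Fin p) (Fin p) ℝ) (hV : V.PosDef)
    (μ : Measure (Fin p → ℝ)) [IsProbabilityMeasure μ] (hμ : IsCenteredGaussian V μ)
    (β : Fin p → ℝ) (hβ : 0 < β ⬝ᵥ V.mulVec β)
    (α : ℝ) (hα : α ∈ Set.Ioo (0 : ℝ) 1)
    (ξ : ℝ) (hξpos : 0 < ξ) (hξ : chiSq 1 (Set.Iic ξ) = ENNReal.ofReal α) :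
    μ {x | (β ⬝ᵥ x) ^ 2 ≤ (β ⬝ᵥ V.mulVec β) * ξ} = ENNReal.ofReal α ∧
    ∀ A : Set (Fin p → ℝ), MeasurableSet A → μ A = ENNReal.ofReal α →
      (∫ x in {x | (β ⬝ᵥ x) ^ 2 ≤ (β ⬝ᵥ V.mulVec β) * ξ}, (β ⬝ᵥ x) ^ 2 ∂μ) /
          (μ {x | (β ⬝ᵥ x) ^ 2 ≤ (β ⬝ᵥ V.mulVec β) * ξ}).toReal
        ≤ (∫ x in A, (β ⬝ᵥ x) ^ 2 ∂μ) / (μ A).toReal := by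
  set v : ℝ := β ⬝ᵥ V.mulVec β with hvdef
  set L : (Fin p → ℝ) → ℝ := fun x => β ⬝ᵥ x with hLdef
  have hL : Measurable L := by
    simp only [hLdef, dotProduct]
    exact Finset.measurable_sum _ fun i _ => (measurable_pi_apply i).const_mul _
  have hvne : Real.toNNReal v ≠ 0 := by
    simp [Real.toNNReal_eq_zero, not_le, hβ]
  -- part 1 : measure of the slab
  have hpre : {x | (β ⬝ᵥ x) ^ 2 ≤ v * ξ} = L ⁻¹' {y : ℝ | y ^ 2 ≤ v * ξ} := rfl
  have hmeasS : μ {x | (β ⬝ᵥ x) ^ 2 ≤ v * ξ} = ENNReal.ofReal α := by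
    rw [hpre, ← Measure.map_apply hL (measurableSet_sq_le _), hμ β, ← hvdef,
      gaussianReal_sq_le v hβ ξ, ← chiSq_one_Iic, hξ]
  refine ⟨hmeasS, fun A hA hAm => ?_⟩
  -- integrability of the squared projection
  have hIntmap : Integrable (fun y : ℝ => y ^ 2) (μ.map L) := by
    rw [hμ β]
    exact integrable_sq_gaussianReal _ hvne
  have hInt : Integrable (fun x => (β ⬝ᵥ x) ^ 2) μ :=
    (integrable_map_measure (by fun_prop) hL.aemeasurable).mp hIntmap
  -- apply the level-set lemma
  have hkey : ∫ x in {x | (β ⬝ᵥ x) ^ 2 ≤ v * ξ}, (β ⬝ᵥ x) ^ 2 ∂μ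
      ≤ ∫ x in A, (β ⬝ᵥ x) ^ 2 ∂μ :=
    levelSet_integral_le μ (hL.pow_const 2) hInt (v * ξ) hA (hmeasS.trans hAm.symm)
  rw [hmeasS, hAm]
  have hd : (0:ℝ) < (ENNReal.ofReal α).toReal := by
    rw [ENNReal.toReal_ofReal hα.1.le]; exact hα.1
  gcongr
end
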